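/- The Gaussian mechanism satisfies Rényi differential privacy: adding Gaussian noise N(0, σ²) to a real-valued function f with sensitivity Δ = max over adjacent d, d' of |f(d) − f(d')| yields a mechanism satisfying (λ, λΔ²/(2σ²))-RDP for every λ > 1. -/

import Mathlib

/-- Density of the Gaussian distribution N(μ, σ²). -/
noncomputable def gaussDensity (μ σ z : ℝ) : ℝ :=
  (1 / (σ * Real.sqrt (2 * Real.pi))) * Real.exp (-(z - μ) ^ 2 / (2 * σ ^ 2))

open Real MeasureTheory ProbabilityTheory

noncomputable def renyiDiv {α : Type*} [MeasureSpace α] (lam : ℝ) (p q : α → ℝ) : ℝ :=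
  1 / (lam - 1) * log (∫ z, p z ^ lam * q z ^ (1 - lam))

lemma gaussDensity_eq_gaussianPDFReal (μ : ℝ) {σ : ℝ} (hσ : 0 ≤ σ) :
    gaussDensity μ σ = gaussianPDFReal μ (σ ^ 2).toNNReal := by
  ext z
  rw [gaussDensity, gaussianPDFReal_def, Real.coe_toNNReal _ (sq_nonneg σ), one_div,
    mul_comm (2 * π), sqrt_mul (sq_nonneg σ), sqrt_sq hσ]

lemma integral_gaussDensity (μ : ℝ) {σ : ℝ} (hσ : 0 < σ) : ∫ z, gaussDensity μ σ z = 1 := by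
  rw [gaussDensity_eq_gaussianPDFReal μ hσ.le]
  exact integral_gaussianPDFReal_eq_one μ (Real.toNNReal_pos.mpr (by positivity)).ne'

-- Completing the square in the exponent.
lemma gaussDensity_rpow_mul_rpow (μ μ' lam : ℝ) {σ : ℝ} (hσ : 0 < σ) (z : ℝ) :
    gaussDensity μ σ z ^ lam * gaussDensity μ' σ z ^ (1 - lam) =
      exp (lam * (lam - 1) * (μ - μ') ^ 2 / (2 * σ ^ 2)) *
        gaussDensity (lam * μ + (1 - lam) * μ') σ z := by
  have hc : 0 < 1 / (σ * sqrt (2 * π)) := by positivity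
  have hexp : ∀ m, gaussDensity m σ z =
      exp (log (1 / (σ * sqrt (2 * π))) + -(z - m) ^ 2 / (2 * σ ^ 2)) := fun m => by
    rw [exp_add, exp_log hc, gaussDensity]
  simp only [hexp, ← exp_mul, ← exp_add]
  congr 1
  field_simp
  ring

theorem renyiDiv_gaussDensity (μ μ' : ℝ) {σ lam : ℝ} (hσ : 0 < σ) (hlam : lam ≠ 1) :
    renyiDiv lam (gaussDensity μ σ) (gaussDensity μ' σ) = lam * (μ - μ') ^ 2 / (2 * σ ^ 2) := by
  have hlam' : lam - 1 ≠ 0 := sub_ne_zero.mpr hlam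
  simp only [renyiDiv, gaussDensity_rpow_mul_rpow μ μ' lam hσ, integral_const_mul,
    integral_gaussDensity _ hσ, mul_one, log_exp]
  field_simp

/-- The Gaussian mechanism satisfies RDP: adding N(0, σ²) noise to a real-valued f with
sensitivity Δ yields a mechanism satisfying (λ, λΔ²/(2σ²))-RDP for every λ > 1. -/
theorem gaussian_mechanism_rdp {D : Type} (Adj : D → D → Prop) (f : D → ℝ) (Δ σ : ℝ)
    (hσ : 0 < σ) (lam : ℝ) (hlam : 1 < lam)
    (hsens : ∀ d d', Adj d d' → |f d - f d'| ≤ Δ) :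
    ∀ d d', Adj d d' →
      (1 / (lam - 1)) * Real.log
          (∫ z : ℝ, gaussDensity (f d) σ z ^ lam * gaussDensity (f d') σ z ^ (1 - lam)) ≤
        lam * Δ ^ 2 / (2 * σ ^ 2) := by
  intro d d' hadj
  change renyiDiv lam (gaussDensity (f d) σ) (gaussDensity (f d') σ) ≤ _
  rw [renyiDiv_gaussDensity _ _ hσ hlam.ne']
  have hsq : (f d - f d') ^ 2 ≤ Δ ^ 2 :=
    sq_le_sq.mpr ((hsens d d' hadj).trans (le_abs_self Δ))
  gcongr
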